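/- For any real numbers b, b′ with b ≥ b′ > 0 and any a ∈ ℝ, |h(a/b) − h(a/b′)| ≤ |b − b′|/b, where h(t) = t for |t| ≤ 1 and h(t) = sgn(t) for |t| > 1. -/

import Mathlib

open MeasureTheory ProbabilityTheory Finset

noncomputable section

namespace RS

/-- The ψ₂ (sub-Gaussian / Orlicz) norm of a real random variable. -/
def psi2Norm {Ω : Type*} [MeasurableSpace Ω] (P : Measure Ω) (f : Ω → ℝ) : ℝ :=
  sInf {η : ℝ | 0 < η ∧ ∫ ω, Real.exp ((|f ω| / η) ^ 2) ∂P ≤ 2}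

/-- Euclidean inner product on `Fin d → ℝ`. -/
def dot {d : ℕ} (x v : Fin d → ℝ) : ℝ := ∑ j, x j * v j

/-- The quadratic form `vᵀ Σ v`. -/
def quadForm {d : ℕ} (S : Matrix (Fin d) (Fin d) ℝ) (v : Fin d → ℝ) : ℝ :=
  ∑ i, ∑ j, v i * S i j * v j

/-- `‖v‖_Σ = sqrt (vᵀ Σ v)`. -/
def sigmaNorm {d : ℕ} (S : Matrix (Fin d) (Fin d) ℝ) (v : Fin d → ℝ) : ℝ :=
  Real.sqrt (quadForm S v)

/-- Euclidean norm. -/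
def l2norm {d : ℕ} (v : Fin d → ℝ) : ℝ := Real.sqrt (∑ i, v i ^ 2)

/-- `x` is an `L`-sub-Gaussian random vector with covariance matrix `S`. -/
def IsLSubGaussian {Ω : Type*} [MeasurableSpace Ω] (P : Measure Ω) {d : ℕ}
    (S : Matrix (Fin d) (Fin d) ℝ) (L : ℝ) (x : Ω → Fin d → ℝ) : Prop :=
  ∀ v : Fin d → ℝ, psi2Norm P (fun ω => dot (x ω) v) ≤ L * sigmaNorm S v

/-- SLOPE norm `‖v‖_w = ∑ᵢ |v|₍ᵢ₎ wᵢ` (for non-increasing nonnegative weights `w`,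
by the rearrangement inequality this equals the maximum over permutations). -/
def slopeNorm {d : ℕ} (w v : Fin d → ℝ) : ℝ :=
  Finset.univ.sup' ⟨Equiv.refl (Fin d), Finset.mem_univ _⟩
    (fun σ : Equiv.Perm (Fin d) => ∑ i, |v (σ i)| * w i)

/-- The Huber loss. -/
def huber (t : ℝ) : ℝ := if |t| ≤ 1 then t ^ 2 / 2 else |t| - 1 / 2

/-- Derivative of the Huber loss. -/
def hub (t : ℝ) : ℝ := if |t| ≤ 1 then t else Real.sign t

/-- The family `f` is an i.i.d. sequence under `P`. -/
def IsIID {Ω E : Type*} [MeasurableSpace Ω] [MeasurableSpace E]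
    (P : Measure Ω) {n : ℕ} (f : Fin n → Ω → E) : Prop :=
  iIndepFun f P ∧
  ∀ i j : Fin n, Measure.map (f i) P = Measure.map (f j) P

/-- `m` is a median of the finite collection `f`. -/
def IsMedian {k : ℕ} (f : Fin k → ℝ) (m : ℝ) : Prop :=
  k ≤ 2 * (Finset.univ.filter fun i => f i ≤ m).card ∧
  k ≤ 2 * (Finset.univ.filter fun i => m ≤ f i).card

/-- SLOPE weights `λ_i = sqrt (log (e d / i) / n)` (1-indexed). -/
def lamWeights (d n : ℕ) : Fin d → ℝ :=
  fun i => Real.sqrt (Real.log (Real.exp 1 * d / ((i : ℕ) + 1)) / n)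

/-- Restricted-eigenvalue assumption: `‖v‖_Σ² ≥ κ ‖v‖₂²` for every `v` with
`‖v‖_λ ≤ c_RE √(∑_{i≤s} λ_i²) ‖v‖₂`. -/
def REAssumption {d : ℕ} (S : Matrix (Fin d) (Fin d) ℝ) (lam : Fin d → ℝ)
    (s : ℕ) (κ cRE : ℝ) : Prop :=
  ∀ v : Fin d → ℝ,
    slopeNorm lam v ≤
      cRE * Real.sqrt (∑ i ∈ Finset.univ.filter (fun i : Fin d => (i : ℕ) < s), lam i ^ 2)
        * l2norm v →
    κ * l2norm v ^ 2 ≤ sigmaNorm S v ^ 2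

/-- `R_Σ = (C_λ/κ)√(log(ed/s)/n) + L√(log(1/δ)/n) + L(o/n)√(log(n/o))`. -/
def RSig (Clam κ L : ℝ) (d s n o : ℕ) (δ : ℝ) : ℝ :=
  Clam / κ * Real.sqrt (Real.log (Real.exp 1 * d / s) / n) +
    L * Real.sqrt (Real.log (1 / δ) / n) +
    L * ((o : ℝ) / n) * Real.sqrt (Real.log ((n : ℝ) / o))

/-- The SLOPE-penalized Huber objective. -/
def phrObj {Ω : Type*} {d n : ℕ} (x : Fin n → Ω → Fin d → ℝ) (y : Fin n → Ω → ℝ)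
    (lam : Fin d → ℝ) (CH Clam ς : ℝ) (ω : Ω) (β : Fin d → ℝ) : ℝ :=
  (∑ i, (CH * ς) ^ 2 * huber ((y i ω - dot (x i ω) β) / (CH * ς))) +
    Clam * CH * ς * slopeNorm lam β

/-- Mean of the absolute residuals over the `k`-th block of size `N`. -/
def blockMeanAbs {Ω : Type*} {d n : ℕ} (x : Fin n → Ω → Fin d → ℝ) (y : Fin n → Ω → ℝ)
    (βh : Fin d → ℝ) (N : ℕ) (ω : Ω) {B : ℕ} (k : Fin B) : ℝ :=
  (1 / (N : ℝ)) *
    ∑ i ∈ Finset.univ.filter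
      (fun i : Fin n => (k : ℕ) * N ≤ (i : ℕ) ∧ (i : ℕ) < ((k : ℕ) + 1) * N),
      |y i ω - dot (x i ω) βh|

/-- Mean of the residuals over the `k`-th block of size `N`. -/
def blockMeanRaw {Ω : Type*} {d n : ℕ} (x : Fin n → Ω → Fin d → ℝ) (y : Fin n → Ω → ℝ)
    (βh : Fin d → ℝ) (N : ℕ) (ω : Ω) {B : ℕ} (k : Fin B) : ℝ :=
  (1 / (N : ℝ)) *
    ∑ i ∈ Finset.univ.filter
      (fun i : Fin n => (k : ℕ) * N ≤ (i : ℕ) ∧ (i : ℕ) < ((k : ℕ) + 1) * N),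
      (y i ω - dot (x i ω) βh)

/-- The COEFFICIENTS-ESTIMATION iteration: `ς̂₀ = C_ini`; for `1 ≤ l ≤ N_Iter`,
`β̂_l` minimizes the SLOPE-penalized Huber objective with scale `ς̂_{l-1}`, and
`ς̂_l` is `8 ×` a median of the block means of absolute residuals of `β̂_l`. -/
def CoefIter {Ω : Type*} {d n : ℕ} (x : Fin n → Ω → Fin d → ℝ) (y : Fin n → Ω → ℝ)
    (lam : Fin d → ℝ) (CH Clam Cini : ℝ) (N B NIter : ℕ)
    (betahat : ℕ → Ω → Fin d → ℝ) (sighat : ℕ → Ω → ℝ) : Prop :=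
  (∀ ω, sighat 0 ω = Cini) ∧
  (∀ l ω, 1 ≤ l → l ≤ NIter →
    ∀ β : Fin d → ℝ,
      phrObj x y lam CH Clam (sighat (l - 1) ω) ω (betahat l ω) ≤
        phrObj x y lam CH Clam (sighat (l - 1) ω) ω β) ∧
  (∀ l ω, 1 ≤ l → l ≤ NIter →
    IsMedian (fun k : Fin B => blockMeanAbs x y (betahat l ω) N ω k) (sighat l ω / 8))

/-- First copy of sample `i` among `2n` samples. -/
def idxL {n : ℕ} (i : Fin n) : Fin (2 * n) := ⟨i.1, by have := i.isLt; omega⟩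

/-- Second copy of sample `i` among `2n` samples. -/
def idxR {n : ℕ} (i : Fin n) : Fin (2 * n) := ⟨i.1 + n, by have := i.isLt; omega⟩

/-- NORMALIZING step for the covariates. -/
def normX {Ω : Type*} {d n : ℕ} (x : Fin (2 * n) → Ω → Fin d → ℝ) :
    Fin n → Ω → Fin d → ℝ :=
  fun i ω j => (x (idxL i) ω j - x (idxR i) ω j) / Real.sqrt 2

/-- NORMALIZING step for the responses. -/
def normY {Ω : Type*} {n : ℕ} (y : Fin (2 * n) → Ω → ℝ) : Fin n → Ω → ℝ :=
  fun i ω => (y (idxL i) ω - y (idxR i) ω) / Real.sqrt 2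

/-- `(μ̂, θ̂)` minimizes the INTERCEPT-ESTIMATION objective
`√(∑ᵢ (yᵢ - xᵢᵀβ̂ - μ - √n θᵢ)²) + 80 ‖θ‖_ι` at every sample point. -/
def IsInterceptMin {Ω : Type*} {d n : ℕ} (x : Fin n → Ω → Fin d → ℝ)
    (y : Fin n → Ω → ℝ) (βh : Ω → Fin d → ℝ) (ι : Fin n → ℝ)
    (μh : Ω → ℝ) (θh : Ω → Fin n → ℝ) : Prop :=
  ∀ ω (μ : ℝ) (θv : Fin n → ℝ),
    Real.sqrt (∑ i, (y i ω - dot (x i ω) (βh ω) - μh ω - Real.sqrt n * θh ω i) ^ 2) +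
        80 * slopeNorm ι (θh ω) ≤
      Real.sqrt (∑ i, (y i ω - dot (x i ω) (βh ω) - μ - Real.sqrt n * θv i) ^ 2) +
        80 * slopeNorm ι θv

/-! With `s = b' / b ∈ (0, 1]` we have `a / b = s * (a / b')`. Since `hub` is odd and equals
`min t 1` on `[0, ∞)`, which is monotone and star-shaped about `0`, `hub (s * x)` lies between
`s * hub x` and `hub x`, hence within `(1 - s) * |hub x| ≤ 1 - s` of `hub x`. -/

lemma hub_neg (t : ℝ) : hub (-t) = -hub t := by
  simp only [hub, abs_neg, Real.sign_neg]
  split_ifs <;> rfl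

lemma hub_of_nonneg {t : ℝ} (ht : 0 ≤ t) : hub t = min t 1 := by
  rcases le_or_gt t 1 with h | h
  · rw [hub, if_pos (abs_le.2 ⟨by linarith, h⟩), min_eq_left h]
  · rw [hub, if_neg (by rw [abs_of_nonneg ht]; linarith), Real.sign_of_pos (by linarith),
      min_eq_right h.le]

lemma abs_min_one_mul_sub_min_one_le {s x : ℝ} (hs₀ : 0 ≤ s) (hs₁ : s ≤ 1) (hx : 0 ≤ x) :
    |min (s * x) 1 - min x 1| ≤ 1 - s := by
  have h_le : min (s * x) 1 ≤ min x 1 :=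
    min_le_min_right 1 (mul_le_of_le_one_left hx hs₁)
  have h_ge : s * min x 1 ≤ min (s * x) 1 :=
    le_min (mul_le_mul_of_nonneg_left (min_le_left x 1) hs₀)
      (mul_le_of_le_one_right hs₀ (min_le_right x 1) |>.trans hs₁)
  rw [abs_sub_comm, abs_of_nonneg (sub_nonneg.2 h_le)]
  nlinarith [min_le_right x 1]

lemma abs_hub_mul_sub_hub_le {s : ℝ} (hs₀ : 0 ≤ s) (hs₁ : s ≤ 1) (x : ℝ) :
    |hub (s * x) - hub x| ≤ 1 - s := by
  rcases le_total 0 x with hx | hx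
  · rw [hub_of_nonneg (mul_nonneg hs₀ hx), hub_of_nonneg hx]
    exact abs_min_one_mul_sub_min_one_le hs₀ hs₁ hx
  · have hx' : 0 ≤ -x := neg_nonneg.2 hx
    have := abs_min_one_mul_sub_min_one_le hs₀ hs₁ hx'
    rwa [← hub_of_nonneg (mul_nonneg hs₀ hx'), ← hub_of_nonneg hx', mul_neg, hub_neg, hub_neg,
      ← neg_sub', abs_neg] at this

/-- For b ≥ b′ > 0 and a ∈ ℝ, |h(a/b) − h(a/b′)| ≤ |b − b′|/b. -/
theorem huber_deriv_scale_lipschitz (b b' a : ℝ) (hb' : 0 < b') (hbb' : b' ≤ b) :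
    |hub (a / b) - hub (a / b')| ≤ |b - b'| / b := by
  have hb : 0 < b := hb'.trans_le hbb'
  have h_scale : a / b = b' / b * (a / b') := by field_simp
  have h_gap : 1 - b' / b = |b - b'| / b := by
    rw [abs_of_nonneg (sub_nonneg.2 hbb')]
    field_simp
  rw [h_scale, ← h_gap]
  exact abs_hub_mul_sub_hub_le (by positivity) ((div_le_one hb).2 hbb') _

end RS
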